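/- Fix a nonempty set U and a predicate type π. The bijection τ_π : ⟦π⟧*_U → (⟦π⟧_U)^c commutes with the lattice operations: (1) for every subset S ⊆ ⟦π⟧*_U, τ_π of the ≤_π-supremum of S equals the componentwise supremum of τ_π(S) in (⟦π⟧_U)^c; (2) for every subset S ⊆ ⟦π⟧*_U, τ_π of the ≤_π-infimum of S equals the componentwise infimum of τ_π(S); (3) for every nonempty subset S ⊆ ⟦π⟧*_U, τ_π of the ≼_π-greatest lower bound of S equals the ≼-greatest lower bound of τ_π(S) in (⟦π⟧_U)^c, namely the pair (infimum of the first components of τ_π(S), supremum of the second components of τ_π(S)). -/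

import Mathlib

/-- The three-valued truth domain: false, undef, true. -/
inductive Three : Type where
  | fls : Three
  | undef : Three
  | tru : Three
deriving DecidableEq

def Three.toNat : Three → ℕ
  | .fls => 0
  | .undef => 1
  | .tru => 2

/-- Truth order on `Three`, induced by `fls < undef < tru`. -/
def Three.le (a b : Three) : Prop := a.toNat ≤ b.toNat

/-- Precision order on `Three`, induced by `undef ≺ fls` and `undef ≺ tru`. -/
def Three.prec (a b : Three) : Prop := a = .undef ∨ a = b

/-- Predicate types `π ::= o | ρ → π` where the argument `ρ` is either the
individual type `ι` (constructor `arrI`) or a predicate type (constructor `arrP`). -/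
inductive PTy : Type where
  | o : PTy
  | arrI : PTy → PTy
  | arrP : PTy → PTy → PTy

/-- Argument types `ρ ::= ι | π`. -/
inductive ATy : Type where
  | iota : ATy
  | pred : PTy → ATy

/-- Two-valued semantics of predicate types over base set `U`. -/
def sem2 (U : Type) : PTy → Type
  | .o => Bool
  | .arrI π => U → sem2 U π
  | .arrP ρ π => sem2 U ρ → sem2 U π

/-- Three-valued semantics: functions take *two-valued* arguments. -/
def sem3 (U : Type) : PTy → Type
  | .o => Three
  | .arrI π => U → sem3 U π
  | .arrP ρ π => sem2 U ρ → sem3 U π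

/-- Two-valued semantics of argument types. -/
def semA (U : Type) : ATy → Type
  | .iota => U
  | .pred π => sem2 U π

/-- Pointwise (truth) order on the two-valued domains. -/
def le2 (U : Type) : (π : PTy) → sem2 U π → sem2 U π → Prop
  | .o, a, b => @LE.le Bool _ a b
  | .arrI π, f, g => ∀ d : U, le2 U π (f d) (g d)
  | .arrP ρ π, f, g => ∀ d : sem2 U ρ, le2 U π (f d) (g d)

/-- Pointwise truth order on the three-valued domains. -/
def le3 (U : Type) : (π : PTy) → sem3 U π → sem3 U π → Prop
  | .o, a, b => Three.le a b
  | .arrI π, f, g => ∀ d : U, le3 U π (f d) (g d)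
  | .arrP ρ π, f, g => ∀ d : sem2 U ρ, le3 U π (f d) (g d)

/-- Pointwise precision order on the three-valued domains. -/
def prec3 (U : Type) : (π : PTy) → sem3 U π → sem3 U π → Prop
  | .o, a, b => Three.prec a b
  | .arrI π, f, g => ∀ d : U, prec3 U π (f d) (g d)
  | .arrP ρ π, f, g => ∀ d : sem2 U ρ, prec3 U π (f d) (g d)

/-- The everywhere-undefined element of the three-valued domain. -/
def undef3 (U : Type) : (π : PTy) → sem3 U π
  | .o => Three.undef
  | .arrI π => fun _ => undef3 U π
  | .arrP _ρ π => fun _ => undef3 U π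

def tauo : Three → Bool × Bool
  | .fls => (false, false)
  | .undef => (false, true)
  | .tru => (true, true)

/-- The map `τ_π` from the three-valued domain to pairs of two-valued elements. -/
def tau (U : Type) : (π : PTy) → sem3 U π → sem2 U π × sem2 U π
  | .o, a => tauo a
  | .arrI π, f => (fun d => (tau U π (f d)).1, fun d => (tau U π (f d)).2)
  | .arrP _ρ π, f => (fun d => (tau U π (f d)).1, fun d => (tau U π (f d)).2)

/-- The map `τ⁻¹_π` from pairs of two-valued elements to the three-valued domain
(on non-consistent pairs at base type its value is irrelevant junk). -/
def tauInv (U : Type) : (π : PTy) → sem2 U π → sem2 U π → sem3 U π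
  | .o, a, b => cond a (cond b Three.tru Three.undef) (cond b Three.undef Three.fls)
  | .arrI π, f, g => fun d => tauInv U π (f d) (g d)
  | .arrP _ρ π, f, g => fun d => tauInv U π (f d) (g d)

/-- The embedding `ε_π` of the two-valued domain into the three-valued one. -/
def eps (U : Type) : (π : PTy) → sem2 U π → sem3 U π
  | .o, b => cond b Three.tru Three.fls
  | .arrI π, f => fun d => eps U π (f d)
  | .arrP _ρ π, f => fun d => eps U π (f d)

/-- The order of a predicate type: `order(o) = 1`,
`order(ρ→π) = max (order ρ + 1) (order π)` with `order ι = 0`. -/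
def orderP : PTy → ℕ
  | .o => 1
  | .arrI π => max 1 (orderP π)
  | .arrP ρ π => max (orderP ρ + 1) (orderP π)

/-- The order of an argument type. -/
def orderA : ATy → ℕ
  | .iota => 0
  | .pred π => orderP π

/-- Iterated exponential: `expk 0 x = x`, `expk (k+1) x = 2 ^ expk k x`. -/
def expk : ℕ → ℕ → ℕ
  | 0, x => x
  | k+1, x => 2 ^ expk k x

/-- The product of the cardinalities of the argument domains of a predicate type. -/
noncomputable def argProd (U : Type) : PTy → ℕ
  | .o => 1
  | .arrI π => Nat.card U * argProd U π
  | .arrP ρ π => Nat.card (sem2 U ρ) * argProd U π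

/-- `s` is a least upper bound of `S` with respect to the relation `R`. -/
def IsLubR {α : Type _} (R : α → α → Prop) (S : Set α) (s : α) : Prop :=
  (∀ a ∈ S, R a s) ∧ ∀ b, (∀ a ∈ S, R a b) → R s b

/-- `s` is a greatest lower bound of `S` with respect to the relation `R`. -/
def IsGlbR {α : Type _} (R : α → α → Prop) (S : Set α) (s : α) : Prop :=
  (∀ a ∈ S, R s a) ∧ ∀ b, (∀ a ∈ S, R b a) → R b s

/-- The set of consistent pairs `L^c = {(x,y) ∈ L × L | x ≤ y}`. -/
def Lc (L : Type _) [CompleteLattice L] : Type _ := {p : L × L // p.1 ≤ p.2}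

/-- The precision order on consistent pairs: `(x,y) ≼ (x',y')` iff `x ≤ x'` and `y' ≤ y`. -/
def precPair {L : Type _} [CompleteLattice L] (a b : Lc L) : Prop :=
  a.1.1 ≤ b.1.1 ∧ b.1.2 ≤ a.1.2

/-!
Every order in sight is pointwise at arrow types, and bounds for a pointwise order are computed
pointwise, so by induction on `π` it suffices to treat `τ_o : Three → Bool × Bool`. There each
projection is monotone and has an adjoint for each of the three orders in question (for the
precision order the second projection is antitone, which turns the `≼`-infimum into a supremum),
and a map with a lower adjoint preserves greatest lower bounds.
-/

section BoundsOfRelations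

variable {α β D : Type*}

def PreservesGlbR (R : α → α → Prop) (R' : β → β → Prop) (f : α → β) : Prop :=
  ∀ S s, IsGlbR R S s → IsGlbR R' (f '' S) (f s)

def PreservesLubR (R : α → α → Prop) (R' : β → β → Prop) (f : α → β) : Prop :=
  ∀ S s, IsLubR R S s → IsLubR R' (f '' S) (f s)

theorem preservesGlbR_of_adjoint {R : α → α → Prop} {R' : β → β → Prop} {f : α → β}
    (l : β → α) (hf : ∀ a a', R a a' → R' (f a) (f a')) (hl : ∀ b a, R (l b) a ↔ R' b (f a)) :
    PreservesGlbR R R' f := by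
  intro S s hs
  refine ⟨?_, fun b hb => ?_⟩
  · rintro _ ⟨a, ha, rfl⟩
    exact hf _ _ (hs.1 a ha)
  · exact (hl b s).1 (hs.2 (l b) fun a ha => (hl b a).2 (hb _ ⟨a, ha, rfl⟩))

theorem preservesLubR_of_adjoint {R : α → α → Prop} {R' : β → β → Prop} {f : α → β}
    (u : β → α) (hf : ∀ a a', R a a' → R' (f a) (f a')) (hu : ∀ b a, R a (u b) ↔ R' (f a) b) :
    PreservesLubR R R' f :=
  preservesGlbR_of_adjoint (R := flip R) (R' := flip R') u (fun a a' h => hf a' a h) hu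

theorem isGlbR_pi_iff {R : α → α → Prop} {S : Set (D → α)} {s : D → α} :
    IsGlbR (fun F G => ∀ d, R (F d) (G d)) S s ↔ ∀ d, IsGlbR R ((fun F => F d) '' S) (s d) := by
  classical
  refine ⟨fun hs d => ⟨?_, fun b hb => ?_⟩, fun hs => ⟨?_, fun B hB d => ?_⟩⟩
  · rintro _ ⟨F, hF, rfl⟩
    exact hs.1 F hF d
  · have hlower : ∀ F ∈ S, ∀ e, R (Function.update s d b e) (F e) := by
      intro F hF e
      rcases eq_or_ne e d with rfl | hne
      · simpa using hb _ ⟨F, hF, rfl⟩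
      · simpa [hne] using hs.1 F hF e
    simpa using hs.2 _ hlower d
  · exact fun F hF d => (hs d).1 _ ⟨F, hF, rfl⟩
  · exact (hs d).2 (B d) (by rintro _ ⟨F, hF, rfl⟩; exact hB F hF d)

theorem PreservesGlbR.pi {R : α → α → Prop} {R' : β → β → Prop} {f : α → β}
    (hf : PreservesGlbR R R' f) :
    PreservesGlbR (fun F G : D → α => ∀ d, R (F d) (G d)) (fun F G : D → β => ∀ d, R' (F d) (G d))
      (fun F d => f (F d)) := by
  intro S s hs
  rw [isGlbR_pi_iff] at hs ⊢
  exact fun d => by simpa only [Set.image_image] using hf _ _ (hs d)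

theorem PreservesLubR.pi {R : α → α → Prop} {R' : β → β → Prop} {f : α → β}
    (hf : PreservesLubR R R' f) :
    PreservesLubR (fun F G : D → α => ∀ d, R (F d) (G d)) (fun F G : D → β => ∀ d, R' (F d) (G d))
      (fun F d => f (F d)) :=
  PreservesGlbR.pi (R := flip R) (R' := flip R') hf

end BoundsOfRelations

instance : Fintype Three :=
  ⟨{.fls, .undef, .tru}, fun a => by cases a <;> simp⟩

instance : DecidableRel Three.le := fun a b => Nat.decLe a.toNat b.toNat

instance : DecidableRel Three.prec := fun a b => inferInstanceAs (Decidable (a = .undef ∨ a = b))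

theorem preservesLubR_tauo :
    PreservesLubR Three.le (· ≤ ·) (fun a => (tauo a).1) ∧
      PreservesLubR Three.le (· ≤ ·) (fun a => (tauo a).2) :=
  ⟨preservesLubR_of_adjoint (fun b => cond b .tru .undef) (by decide) (by decide),
    preservesLubR_of_adjoint (fun b => cond b .tru .fls) (by decide) (by decide)⟩

theorem preservesGlbR_tauo :
    PreservesGlbR Three.le (· ≤ ·) (fun a => (tauo a).1) ∧
      PreservesGlbR Three.le (· ≤ ·) (fun a => (tauo a).2) :=
  ⟨preservesGlbR_of_adjoint (fun b => cond b .tru .fls) (by decide) (by decide),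
    preservesGlbR_of_adjoint (fun b => cond b .undef .fls) (by decide) (by decide)⟩

theorem preservesGlbR_prec_tauo :
    PreservesGlbR Three.prec (· ≤ ·) (fun a => (tauo a).1) ∧
      PreservesGlbR Three.prec (· ≥ ·) (fun a => (tauo a).2) :=
  ⟨preservesGlbR_of_adjoint (fun b => cond b .tru .undef) (by decide) (by decide),
    preservesGlbR_of_adjoint (fun b => cond b .undef .fls) (by decide) (by decide)⟩

section Tau

variable (U : Type)

theorem preservesLubR_tau (π : PTy) :
    PreservesLubR (le3 U π) (le2 U π) (fun f => (tau U π f).1) ∧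
      PreservesLubR (le3 U π) (le2 U π) (fun f => (tau U π f).2) := by
  induction π with
  | o => exact preservesLubR_tauo
  | arrI π ih => exact ⟨ih.1.pi, ih.2.pi⟩
  | arrP _ π _ ih => exact ⟨ih.1.pi, ih.2.pi⟩

theorem preservesGlbR_tau (π : PTy) :
    PreservesGlbR (le3 U π) (le2 U π) (fun f => (tau U π f).1) ∧
      PreservesGlbR (le3 U π) (le2 U π) (fun f => (tau U π f).2) := by
  induction π with
  | o => exact preservesGlbR_tauo
  | arrI π ih => exact ⟨ih.1.pi, ih.2.pi⟩
  | arrP _ π _ ih => exact ⟨ih.1.pi, ih.2.pi⟩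

theorem preservesGlbR_prec_tau (π : PTy) :
    PreservesGlbR (prec3 U π) (le2 U π) (fun f => (tau U π f).1) ∧
      PreservesGlbR (prec3 U π) (flip (le2 U π)) (fun f => (tau U π f).2) := by
  induction π with
  | o => exact preservesGlbR_prec_tauo
  | arrI π ih => exact ⟨ih.1.pi, ih.2.pi⟩
  | arrP _ π _ ih => exact ⟨ih.1.pi, ih.2.pi⟩

end Tau

theorem stmt9_general (U : Type) (π : PTy) :
    (∀ (S : Set (sem3 U π)) (s : sem3 U π), IsLubR (le3 U π) S s →
      IsLubR (le2 U π) ((fun f => (tau U π f).1) '' S) (tau U π s).1 ∧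
      IsLubR (le2 U π) ((fun f => (tau U π f).2) '' S) (tau U π s).2) ∧
    (∀ (S : Set (sem3 U π)) (s : sem3 U π), IsGlbR (le3 U π) S s →
      IsGlbR (le2 U π) ((fun f => (tau U π f).1) '' S) (tau U π s).1 ∧
      IsGlbR (le2 U π) ((fun f => (tau U π f).2) '' S) (tau U π s).2) ∧
    (∀ S : Set (sem3 U π), S.Nonempty → ∀ g : sem3 U π, IsGlbR (prec3 U π) S g →
      IsGlbR (le2 U π) ((fun f => (tau U π f).1) '' S) (tau U π g).1 ∧
      IsLubR (le2 U π) ((fun f => (tau U π f).2) '' S) (tau U π g).2) := by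
  obtain ⟨lub₁, lub₂⟩ := preservesLubR_tau U π
  obtain ⟨glb₁, glb₂⟩ := preservesGlbR_tau U π
  obtain ⟨prec₁, prec₂⟩ := preservesGlbR_prec_tau U π
  exact ⟨fun S s h => ⟨lub₁ S s h, lub₂ S s h⟩, fun S s h => ⟨glb₁ S s h, glb₂ S s h⟩,
    fun S _ g h => ⟨prec₁ S g h, prec₂ S g h⟩⟩

theorem stmt9 (U : Type) (hU : Nonempty U) (π : PTy) :
    (∀ (S : Set (sem3 U π)) (s : sem3 U π), IsLubR (le3 U π) S s →
      IsLubR (le2 U π) ((fun f => (tau U π f).1) '' S) (tau U π s).1 ∧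
      IsLubR (le2 U π) ((fun f => (tau U π f).2) '' S) (tau U π s).2) ∧
    (∀ (S : Set (sem3 U π)) (s : sem3 U π), IsGlbR (le3 U π) S s →
      IsGlbR (le2 U π) ((fun f => (tau U π f).1) '' S) (tau U π s).1 ∧
      IsGlbR (le2 U π) ((fun f => (tau U π f).2) '' S) (tau U π s).2) ∧
    (∀ S : Set (sem3 U π), S.Nonempty → ∀ g : sem3 U π, IsGlbR (prec3 U π) S g →
      IsGlbR (le2 U π) ((fun f => (tau U π f).1) '' S) (tau U π g).1 ∧
      IsLubR (le2 U π) ((fun f => (tau U π f).2) '' S) (tau U π g).2) :=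
  stmt9_general U π
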